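/- arXiv:2102.02139 — 4 statements merged into one kernel-verified Lean document; each statement's English description precedes it below -/
import Mathlib

section
/- Let E ⊂ ℂ be a set with exactly 3 elements and let α be a complex number with α ≠ 1 such that α·E = E (where α·E = {α·z : z ∈ E}). Then either α³ = 1, or α = -1 and E has the form {0, w, -w} for some nonzero complex number w. -/
/-- If a three-element set `E ⊆ ℂ` is invariant under multiplication by `α ≠ 1`, then either
`α³ = 1`, or `α = -1` and `E = {0, w, -w}` for some `w ≠ 0`. -/
theorem stmt2 (E : Set ℂ) (hE : E.ncard = 3) (α : ℂ) (hα : α ≠ 1)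
    (hinv : (fun z => α * z) '' E = E) :
    α ^ 3 = 1 ∨ (α = -1 ∧ ∃ w : ℂ, w ≠ 0 ∧ E = {0, w, -w}) := by
  obtain ⟨a, b, c, hab, hac, hbc, rfl⟩ := Set.ncard_eq_three.mp hE
  have hα0 : α ≠ 0 := by
    rintro rfl
    have ha : a ∈ (fun z => (0:ℂ) * z) '' {a, b, c} := by
      rw [hinv]; exact Set.mem_insert _ _
    have hb : b ∈ (fun z => (0:ℂ) * z) '' {a, b, c} := by
      rw [hinv]; exact Set.mem_insert_of_mem _ (Set.mem_insert _ _)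
    obtain ⟨x, -, hx⟩ := ha
    obtain ⟨y, -, hy⟩ := hb
    simp only [zero_mul] at hx hy
    exact hab (hx.symm.trans hy)
  have hfix : ∀ x : ℂ, x ≠ 0 → α * x = x → False := by
    intro x hx h
    exact hα (mul_right_cancel₀ hx (h.trans (one_mul x).symm))
  have hinj : ∀ x y : ℂ, α * x = α * y → x = y :=
    fun x y h => mul_left_cancel₀ hα0 h
  have hcyc : ∀ x y z : ℂ, x ≠ y → α * x = y → α * y = z → α * z = x → α ^ 3 = 1 := by
    intro x y z hxy h1 h2 h3
    have hx0 : x ≠ 0 := by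
      rintro rfl
      rw [mul_zero] at h1
      exact hxy h1
    have key : α ^ 3 * x = 1 * x := by
      rw [one_mul, show α ^ 3 * x = α * (α * (α * x)) by ring, h1, h2, h3]
    exact mul_right_cancel₀ hx0 key
  have hsq : α * α = 1 → α = -1 := by
    intro h
    have h0 : (α - 1) * (α + 1) = 0 := by linear_combination h
    rcases mul_eq_zero.mp h0 with h' | h'
    · exact absurd (by linear_combination h') hα
    · linear_combination h'
  have mem : ∀ x ∈ ({a, b, c} : Set ℂ), α * x = a ∨ α * x = b ∨ α * x = c := by
    intro x hx
    have : α * x ∈ ({a, b, c} : Set ℂ) := by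
      rw [← hinv]; exact ⟨x, hx, rfl⟩
    simpa using this
  have ma := mem a (by simp)
  have mb := mem b (by simp)
  have mc := mem c (by simp)
  rcases ma with ha | ha | ha
  · -- α * a = a, so a = 0
    have ha0 : a = 0 := by by_contra h; exact hfix a h ha
    have hb0 : b ≠ 0 := fun h => hab (ha0.trans h.symm)
    rcases mb with hb | hb | hb
    · exact absurd (hinj _ _ (ha.trans hb.symm)) hab
    · exact absurd hb (hfix b hb0)
    · -- α * b = c
      rcases mc with hc | hc | hc
      · exact absurd (hinj _ _ (ha.trans hc.symm)) hac
      · -- α * c = b : swap b ↔ c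
        have h2 : α * α = 1 := by
          have key : α * α * b = 1 * b := by rw [one_mul, mul_assoc, hb, hc]
          exact mul_right_cancel₀ hb0 key
        have hneg := hsq h2
        have hcb : c = -b := by rw [← hb, hneg]; ring
        exact Or.inr ⟨hneg, b, hb0, by rw [ha0, hcb]⟩
      · exact absurd (hinj _ _ (hb.trans hc.symm)) hbc
  · -- α * a = b
    have hb0 : b ≠ 0 := by
      rintro rfl
      rcases mul_eq_zero.mp ha with h | h
      · exact hα0 h
      · exact hab h
    rcases mb with hb | hb | hb
    · -- α * b = a : swap a ↔ b
      rcases mc with hc | hc | hc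
      · exact absurd (hinj _ _ (hb.trans hc.symm)) hbc
      · exact absurd (hinj _ _ (ha.trans hc.symm)) hac
      · -- α * c = c
        have hc0 : c = 0 := by by_contra h; exact hfix c h hc
        have ha0 : a ≠ 0 := fun h => hac (h.trans hc0.symm)
        have h2 : α * α = 1 := by
          have key : α * α * a = 1 * a := by rw [one_mul, mul_assoc, ha, hb]
          exact mul_right_cancel₀ ha0 key
        have hneg := hsq h2
        have hba : b = -a := by rw [← ha, hneg]; ring
        refine Or.inr ⟨hneg, a, ha0, ?_⟩
        rw [hc0, hba]
        ext x
        simp only [Set.mem_insert_iff, Set.mem_singleton_iff]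
        tauto
    · exact absurd hb (hfix b hb0)
    · -- α * b = c : cycle a → b → c
      rcases mc with hc | hc | hc
      · exact Or.inl (hcyc a b c hab ha hb hc)
      · exact absurd (hinj _ _ (ha.trans hc.symm)) hac
      · exact absurd (hinj _ _ (hb.trans hc.symm)) hbc
  · -- α * a = c
    have hc0 : c ≠ 0 := by
      rintro rfl
      rcases mul_eq_zero.mp ha with h | h
      · exact hα0 h
      · exact hac h
    rcases mc with hc | hc | hc
    · -- α * c = a : swap a ↔ c
      rcases mb with hb | hb | hb
      · exact absurd (hinj _ _ (hb.trans hc.symm)) hbc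
      · -- α * b = b
        have hb0 : b = 0 := by by_contra h; exact hfix b h hb
        have ha0 : a ≠ 0 := fun h => hab (h.trans hb0.symm)
        have h2 : α * α = 1 := by
          have key : α * α * a = 1 * a := by rw [one_mul, mul_assoc, ha, hc]
          exact mul_right_cancel₀ ha0 key
        have hneg := hsq h2
        have hca : c = -a := by rw [← ha, hneg]; ring
        refine Or.inr ⟨hneg, a, ha0, ?_⟩
        rw [hb0, hca]
        ext x
        simp only [Set.mem_insert_iff, Set.mem_singleton_iff]
        tauto
      · exact absurd (hinj _ _ (ha.trans hb.symm)) hab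
    · -- α * c = b : cycle a → c → b
      rcases mb with hb | hb | hb
      · exact Or.inl (hcyc a c b hac ha hc hb)
      · exact absurd (hinj _ _ (hc.trans hb.symm)) (fun h => hbc h.symm)
      · exact absurd (hinj _ _ (ha.trans hb.symm)) hab
    · exact absurd hc (hfix c hc0)
end

section
/- Let σ > 0, and let f : [0, l] → ℂ be a C² map with |f'(x)| = 1 and |f''(x)| ≤ 2/σ for all x. Define F(x + iy) = f(x) + i·f'(x)·y for x ∈ [0, l] and |y| ≤ σ/4. Then at every point where F is differentiable, the Beltrami coefficient μ_F = (∂F/∂z̄)/(∂F/∂z) satisfies |μ_F| ≤ 1/3. In particular F is 2-quasiconformal. -/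
/-!
Writing `x = re w`, `y = im w`, the differential of `F` sends `1 ↦ f'(x) + i f''(x) y` and
`i ↦ i f'(x)`, so `∂F/∂z̄ = i f''(x) y / 2` and `∂F/∂z = f'(x) + ∂F/∂z̄`. The hypotheses give
`|∂F/∂z̄| ≤ (1/2)(2/σ)(σ/4) = 1/4`, hence `|∂F/∂z| ≥ 1 - 1/4 = 3/4`, and both claims follow.
-/

/-- The map `F(x + iy) = f(x) + i f'(x) y`. -/
noncomputable def beltramiMap (f : ℝ → ℂ) : ℂ → ℂ := fun u =>
  f u.re + Complex.I * deriv f u.re * (u.im : ℂ)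

open Complex

noncomputable def wirtingerDz (L : ℂ →L[ℝ] ℂ) : ℂ := (L 1 - I * L I) / 2

noncomputable def wirtingerDzbar (L : ℂ →L[ℝ] ℂ) : ℂ := (L 1 + I * L I) / 2

section beltramiMap

variable {f : ℝ → ℂ} {w : ℂ}

theorem hasFDerivAt_beltramiMap (hf : DifferentiableAt ℝ f w.re)
    (hf' : DifferentiableAt ℝ (deriv f) w.re) :
    HasFDerivAt (beltramiMap f)
      (reCLM.smulRight (deriv f w.re + I * deriv (deriv f) w.re * w.im) +
        imCLM.smulRight (I * deriv f w.re)) w := by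
  have hre := hf.hasDerivAt.hasFDerivAt.comp w reCLM.hasFDerivAt
  have hre' := hf'.hasDerivAt.hasFDerivAt.comp w reCLM.hasFDerivAt
  have him := (ofRealCLM.comp imCLM).hasFDerivAt (x := w)
  refine (hre.add ((hre'.const_mul I).mul him)).congr_fderiv ?_
  ext v
  simp
  ring

theorem fderiv_beltramiMap_apply_one (hf : DifferentiableAt ℝ f w.re)
    (hf' : DifferentiableAt ℝ (deriv f) w.re) :
    fderiv ℝ (beltramiMap f) w 1 = deriv f w.re + I * deriv (deriv f) w.re * w.im := by
  simp [(hasFDerivAt_beltramiMap hf hf').fderiv]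

theorem fderiv_beltramiMap_apply_I (hf : DifferentiableAt ℝ f w.re)
    (hf' : DifferentiableAt ℝ (deriv f) w.re) :
    fderiv ℝ (beltramiMap f) w I = I * deriv f w.re := by
  simp [(hasFDerivAt_beltramiMap hf hf').fderiv]

theorem wirtingerDzbar_fderiv_beltramiMap (hf : DifferentiableAt ℝ f w.re)
    (hf' : DifferentiableAt ℝ (deriv f) w.re) :
    wirtingerDzbar (fderiv ℝ (beltramiMap f) w) = I * deriv (deriv f) w.re * w.im / 2 := by
  rw [wirtingerDzbar, fderiv_beltramiMap_apply_one hf hf', fderiv_beltramiMap_apply_I hf hf']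
  linear_combination (deriv f w.re / 2) * I_sq

theorem wirtingerDz_fderiv_beltramiMap (hf : DifferentiableAt ℝ f w.re)
    (hf' : DifferentiableAt ℝ (deriv f) w.re) :
    wirtingerDz (fderiv ℝ (beltramiMap f) w) =
      deriv f w.re + wirtingerDzbar (fderiv ℝ (beltramiMap f) w) := by
  rw [wirtingerDz, wirtingerDzbar, fderiv_beltramiMap_apply_one hf hf',
    fderiv_beltramiMap_apply_I hf hf']
  linear_combination (-deriv f w.re) * I_sq

end beltramiMap

theorem norm_I_mul_mul_ofReal_le {σ y : ℝ} {c : ℂ} (hσ : 0 < σ) (hc : ‖c‖ ≤ 2 / σ)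
    (hy : |y| ≤ σ / 4) : ‖I * c * y‖ ≤ 1 / 2 := calc
  ‖I * c * y‖ = ‖c‖ * |y| := by simp
  _ ≤ 2 / σ * (σ / 4) := mul_le_mul hc hy (abs_nonneg y) ((norm_nonneg c).trans hc)
  _ = 1 / 2 := by field_simp; norm_num

/-- If `f : [0, l] → ℂ` is `C²` with `|f'| = 1` and `|f''| ≤ 2/σ`, then
`F(x + iy) = f(x) + i f'(x) y`, for `x ∈ [0, l]`, `|y| ≤ σ/4`, has Beltrami coefficient
`μ_F = F_z̄ / F_z` of modulus at most `1/3` at every point of differentiability; in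
particular `F` is `2`-quasiconformal there. -/
theorem stmt15 (σ l : ℝ) (hσ : 0 < σ) (f : ℝ → ℂ) (hf : ContDiff ℝ 2 f)
    (hf1 : ∀ x ∈ Set.Icc (0 : ℝ) l, ‖deriv f x‖ = 1)
    (hf2 : ∀ x ∈ Set.Icc (0 : ℝ) l, ‖deriv (deriv f) x‖ ≤ 2 / σ) :
    ∀ w : ℂ, w.re ∈ Set.Icc (0 : ℝ) l → |w.im| ≤ σ / 4 →
      DifferentiableAt ℝ (beltramiMap f) w →
      ‖((fderiv ℝ (beltramiMap f) w 1 + Complex.I * fderiv ℝ (beltramiMap f) w Complex.I) / 2) /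
            ((fderiv ℝ (beltramiMap f) w 1 - Complex.I * fderiv ℝ (beltramiMap f) w Complex.I) / 2)‖
          ≤ 1 / 3 ∧
      ‖(fderiv ℝ (beltramiMap f) w 1 - Complex.I * fderiv ℝ (beltramiMap f) w Complex.I) / 2‖ +
          ‖(fderiv ℝ (beltramiMap f) w 1 + Complex.I * fderiv ℝ (beltramiMap f) w Complex.I) / 2‖ ≤
        2 * (‖(fderiv ℝ (beltramiMap f) w 1 - Complex.I * fderiv ℝ (beltramiMap f) w Complex.I) / 2‖ -
          ‖(fderiv ℝ (beltramiMap f) w 1 + Complex.I * fderiv ℝ (beltramiMap f) w Complex.I) / 2‖) := by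
  intro w hx hy _
  have hfx : DifferentiableAt ℝ f w.re := hf.differentiable two_ne_zero w.re
  have hf'x : DifferentiableAt ℝ (deriv f) w.re :=
    (hf.iterate_deriv' 1 1).differentiable one_ne_zero w.re
  rw [← wirtingerDz, ← wirtingerDzbar]
  have hdzbar : ‖wirtingerDzbar (fderiv ℝ (beltramiMap f) w)‖ ≤ 1 / 4 := by
    rw [wirtingerDzbar_fderiv_beltramiMap hfx hf'x, norm_div, RCLike.norm_two]
    linarith [norm_I_mul_mul_ofReal_le hσ (hf2 _ hx) hy]
  have hdz : 3 / 4 ≤ ‖wirtingerDz (fderiv ℝ (beltramiMap f) w)‖ := by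
    rw [wirtingerDz_fderiv_beltramiMap hfx hf'x]
    linarith [norm_sub_le_norm_add (deriv f w.re) (wirtingerDzbar (fderiv ℝ (beltramiMap f) w)),
      hf1 _ hx]
  refine ⟨?_, by linarith⟩
  rw [norm_div, div_le_iff₀ (by linarith)]
  linarith
end

section
/- Let φ : ℂ → ℂ be a continuously differentiable function with compact support. Then the function f(z) = -(1/π) ∬_ℂ φ(ζ)/(ζ - z) dm₂(ζ) is continuously differentiable and satisfies ∂f/∂z̄ = φ on ℂ, where dm₂ is Lebesgue measure on ℂ. -/
/-!
Write `f = φ ⋆ k` with the Cauchy kernel `k u = 1 / (π u)`, which is locally integrable in the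
plane. Differentiating under the convolution gives `∂f/∂z̄ = (∂φ/∂z̄) ⋆ k`, so everything reduces to
the Cauchy–Pompeiu formula `∫ ∂φ/∂z̄ (ζ) / (ζ - z) dm₂(ζ) = -π φ(z)`. In polar coordinates
`ζ = z + r e^{iθ}` one has `r e^{-iθ} ∂φ/∂z̄ = (r ∂_r φ + i ∂_θ φ) / 2`, and the area element
`r dr dθ` cancels the `1/r` of the kernel. The radial term integrates along each ray to `-φ(z)`,
because `φ` has compact support, and the angular term integrates to `0` around each circle.
-/

open MeasureTheory Set Filter Complex
open scoped Real Topology Convolution ComplexConjugate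

/-- `∂/∂z̄` read off a real derivative; bundled as a continuous linear map so that it commutes
with Bochner integrals. -/
noncomputable def dbar : (ℂ →L[ℝ] ℂ) →L[ℝ] ℂ :=
  (2⁻¹ : ℂ) • (ContinuousLinearMap.apply ℝ ℂ 1 + I • ContinuousLinearMap.apply ℝ ℂ I)

lemma dbar_apply (D : ℂ →L[ℝ] ℂ) : dbar D = (D 1 + I * D I) / 2 := by
  simp [dbar]
  ring

lemma conj_mul_dbar (D : ℂ →L[ℝ] ℂ) (u : ℂ) :
    conj u * dbar D = (D u + I * D (u * I)) / 2 := by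
  have hD (v : ℂ) : D v = v.re * D 1 + v.im * D I := by
    conv_lhs =>
      rw [show v = v.re • (1 : ℂ) + v.im • I by simp [real_smul], map_add, map_smul, map_smul]
    simp only [real_smul]
  have hconj : conj u = u.re - u.im * I := by apply Complex.ext <;> simp
  rw [dbar_apply, hD u, hD (u * I), hconj, mul_re, mul_im, I_re, I_im]
  ring_nf
  rw [I_sq]
  push_cast
  ring

noncomputable def cauchyKernel (u : ℂ) : ℂ := ((π : ℂ) * u)⁻¹

lemma locallyIntegrable_cauchyKernel : LocallyIntegrable cauchyKernel := by
  refine locallyIntegrable_of_norm_le_rpow (C := π⁻¹) (α := 1) (by simp) (by simp)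
    (Eventually.of_forall fun u => ?_) (by unfold cauchyKernel; fun_prop)
  simp [cauchyKernel, Real.rpow_neg_one, abs_of_pos Real.pi_pos, mul_comm]

lemma convolution_cauchyKernel (g : ℂ → ℂ) (z : ℂ) :
    (g ⋆[ContinuousLinearMap.mul ℝ ℂ] cauchyKernel) z = -(1 / (π : ℂ)) * ∫ ζ, g ζ / (ζ - z) := by
  rw [convolution_def, ← integral_const_mul]
  congr 1 with ζ
  simp only [ContinuousLinearMap.mul_apply', cauchyKernel]
  rw [← neg_sub ζ z]
  field_simp

lemma dbar_fderiv_convolution {φ k : ℂ → ℂ} (hφ : ContDiff ℝ 1 φ) (hsupp : HasCompactSupport φ)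
    (hk : LocallyIntegrable k) (z : ℂ) :
    dbar (fderiv ℝ (φ ⋆[ContinuousLinearMap.mul ℝ ℂ] k) z) =
      ((fun t => dbar (fderiv ℝ φ t)) ⋆[ContinuousLinearMap.mul ℝ ℂ] k) z := by
  rw [(hsupp.hasFDerivAt_convolution_left _ hφ hk z).fderiv, convolution_def, convolution_def,
    ← dbar.integral_comp_comm ((hsupp.fderiv ℝ).convolutionExists_left _
      (hφ.continuous_fderiv one_ne_zero) hk z)]
  congr 1 with t
  simp only [dbar_apply, ContinuousLinearMap.precompL_apply, ContinuousLinearMap.mul_apply']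
  ring

lemma continuous_circleMap_uncurry (c : ℂ) :
    Continuous fun p : ℝ × ℝ => circleMap c p.1 p.2 := by
  unfold circleMap
  fun_prop

lemma polarCoord_symm_eq_circleMap (p : ℝ × ℝ) :
    Complex.polarCoord.symm p = circleMap 0 p.1 p.2 := by
  rw [Complex.polarCoord_symm_apply, circleMap_zero, exp_mul_I, ← ofReal_cos, ← ofReal_sin]

lemma HasCompactSupport.eventually_circleMap_eq_zero {M : Type*} [Zero M] {f : ℂ → M}
    (hf : HasCompactSupport f) (c : ℂ) : ∀ᶠ r in atTop, ∀ θ, f (circleMap c r θ) = 0 := by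
  obtain ⟨M, hM⟩ := hf.isCompact.isBounded.subset_closedBall c
  filter_upwards [eventually_gt_atTop M] with r hr θ
  refine image_eq_zero_of_notMem_tsupport fun h => ?_
  have := hM h
  rw [Metric.mem_closedBall, dist_eq, circleMap_sub_center, norm_circleMap_zero] at this
  linarith [le_abs_self r]

lemma integrableOn_polarCoord_target {E : Type*} [NormedAddCommGroup E] {F : ℝ × ℝ → E}
    (hF : Continuous F) (h : ∀ᶠ r in atTop, ∀ θ, F (r, θ) = 0) :
    IntegrableOn F polarCoord.target := by
  obtain ⟨R, hR⟩ := eventually_atTop.1 h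
  refine (hF.continuousOn.integrableOn_compact (isCompact_Icc.prod isCompact_Icc))
    |>.of_forall_sdiff_eq_zero (s := Icc 0 R ×ˢ Icc (-π) π)
      polarCoord.open_target.measurableSet ?_
  rintro ⟨r, θ⟩ ⟨⟨hr, hθ⟩, hs⟩
  refine hR r ?_ θ
  by_contra! hrR
  exact hs ⟨⟨le_of_lt hr, hrR.le⟩, Ioo_subset_Icc_self hθ⟩

lemma setIntegral_polarCoord_target {E : Type*} [NormedAddCommGroup E] [NormedSpace ℝ E]
    {F : ℝ × ℝ → E} (hF : IntegrableOn F polarCoord.target) :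
    ∫ p in polarCoord.target, F p = ∫ r in Ioi 0, ∫ θ in Ioo (-π) π, F (r, θ) := by
  rw [polarCoord_target, Measure.volume_eq_prod] at *
  exact setIntegral_prod F hF

lemma integral_Ioi_fderiv_circleMap {E : Type*} [NormedAddCommGroup E] [NormedSpace ℝ E]
    [CompleteSpace E] {φ : ℂ → E} (hφ : ContDiff ℝ 1 φ) (hsupp : HasCompactSupport φ)
    (z : ℂ) (θ : ℝ) :
    ∫ r in Ioi 0, fderiv ℝ φ (circleMap z r θ) (exp (θ * I)) = -φ z := by
  have hderiv (r : ℝ) : HasDerivAt (fun r : ℝ => φ (circleMap z r θ))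
      (fderiv ℝ φ (circleMap z r θ) (exp (θ * I))) r := by
    have : HasDerivAt (fun r : ℝ => circleMap z r θ) (exp (θ * I)) r := by
      simpa [circleMap] using ((ofRealCLM.hasDerivAt (x := r)).mul_const (exp (θ * I))).const_add z
    exact (hφ.differentiable one_ne_zero _).hasFDerivAt.comp_hasDerivAt r this
  have hcont : Continuous fun r : ℝ => fderiv ℝ φ (circleMap z r θ) (exp (θ * I)) :=
    ((hφ.continuous_fderiv one_ne_zero).comp
      ((continuous_circleMap_uncurry z).comp (continuous_id.prodMk continuous_const))).clm_apply
      continuous_const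
  obtain ⟨R, hR⟩ := eventually_atTop.1 ((hsupp.fderiv ℝ).eventually_circleMap_eq_zero z)
  have hint : IntegrableOn (fun r : ℝ => fderiv ℝ φ (circleMap z r θ) (exp (θ * I))) (Ioi 0) :=
    (hcont.integrableOn_Icc (a := 0) (b := R)).of_forall_sdiff_eq_zero measurableSet_Ioi
      fun r ⟨hr, hrR⟩ => by
        rw [hR r (by by_contra! h; exact hrR ⟨le_of_lt hr, h.le⟩) θ, zero_apply]
  have hlim : Tendsto (fun r : ℝ => φ (circleMap z r θ)) atTop (𝓝 0) :=
    tendsto_const_nhds.congr' <|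
      (hsupp.eventually_circleMap_eq_zero z).mono fun r hr => (hr θ).symm
  rw [integral_Ioi_of_hasDerivAt_of_tendsto' (fun r _ => hderiv r) hint hlim, circleMap_zero_radius]
  simp

lemma integral_fderiv_circleMap_mul_I {E : Type*} [NormedAddCommGroup E] [NormedSpace ℝ E]
    [CompleteSpace E] {g : ℂ → E} (hg : ContDiff ℝ 1 g) (c : ℂ) (R : ℝ) :
    ∫ θ in -π..π, fderiv ℝ g (circleMap c R θ) (circleMap 0 R θ * I) = 0 := by
  have hderiv (θ : ℝ) : HasDerivAt (fun θ => g (circleMap c R θ))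
      (fderiv ℝ g (circleMap c R θ) (circleMap 0 R θ * I)) θ :=
    (hg.differentiable one_ne_zero _).hasFDerivAt.comp_hasDerivAt θ (hasDerivAt_circleMap c R θ)
  have hcont : Continuous fun θ => fderiv ℝ g (circleMap c R θ) (circleMap 0 R θ * I) :=
    ((hg.continuous_fderiv one_ne_zero).comp (continuous_circleMap c R)).clm_apply
      ((continuous_circleMap 0 R).mul continuous_const)
  rw [intervalIntegral.integral_eq_sub_of_hasDerivAt (fun θ _ => hderiv θ)
    (hcont.intervalIntegrable _ _)]
  have hperiod : circleMap c R π = circleMap c R (-π) := by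
    simpa [show -π + 2 * π = π by ring] using periodic_circleMap c R (-π)
  rw [hperiod, sub_self]

lemma smul_dbar_div_polarCoord_symm (D : ℂ →L[ℝ] ℂ) {p : ℝ × ℝ} (hp : 0 < p.1) :
    p.1 • (dbar D / Complex.polarCoord.symm p) =
      (D (exp (p.2 * I)) + I * D (exp (p.2 * I) * I)) / 2 := by
  have hinv : (exp (p.2 * I))⁻¹ = conj (exp (p.2 * I)) := by
    rw [← exp_neg, ← exp_conj, map_mul, conj_ofReal, conj_I, mul_neg]
  rw [← conj_mul_dbar, ← hinv, polarCoord_symm_eq_circleMap, circleMap_zero, real_smul]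
  field_simp [hp.ne']

theorem integral_dbar_fderiv_div_sub {φ : ℂ → ℂ} (hφ : ContDiff ℝ 1 φ)
    (hsupp : HasCompactSupport φ) (z : ℂ) :
    ∫ ζ, dbar (fderiv ℝ φ ζ) / (ζ - z) = -π * φ z := by
  set D := fderiv ℝ φ
  set radial : ℝ × ℝ → ℂ := fun p => D (circleMap z p.1 p.2) (exp (p.2 * I))
  set angular : ℝ × ℝ → ℂ := fun p => D (circleMap z p.1 p.2) (exp (p.2 * I) * I)
  have hD : Continuous D := hφ.continuous_fderiv one_ne_zero
  have hD_zero : ∀ᶠ r in atTop, ∀ θ, D (circleMap z r θ) = 0 :=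
    (hsupp.fderiv ℝ).eventually_circleMap_eq_zero z
  have hradial : IntegrableOn radial polarCoord.target :=
    integrableOn_polarCoord_target
      ((hD.comp (continuous_circleMap_uncurry z)).clm_apply (by fun_prop))
      (hD_zero.mono fun r hr θ => by simp [radial, hr θ])
  have hangular : IntegrableOn angular polarCoord.target :=
    integrableOn_polarCoord_target
      ((hD.comp (continuous_circleMap_uncurry z)).clm_apply (by fun_prop))
      (hD_zero.mono fun r hr θ => by simp [angular, hr θ])
  have hradial_int : ∫ p in polarCoord.target, radial p = (2 * π : ℝ) • -φ z := by
    calc ∫ p in polarCoord.target, radial p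
        = ∫ r in Ioi 0, ∫ θ in Ioo (-π) π, radial (r, θ) := setIntegral_polarCoord_target hradial
      _ = ∫ θ in Ioo (-π) π, ∫ r in Ioi 0, radial (r, θ) := by
        refine integral_integral_swap ?_
        rw [Measure.prod_restrict, ← Measure.volume_eq_prod, ← polarCoord_target]
        exact hradial
      _ = ∫ θ in Ioo (-π) π, -φ z :=
        setIntegral_congr_fun measurableSet_Ioo fun θ _ =>
          integral_Ioi_fderiv_circleMap hφ hsupp z θ
      _ = (2 * π : ℝ) • -φ z := by
        rw [setIntegral_const, measureReal_def, Real.volume_Ioo,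
          ENNReal.toReal_ofReal (by linarith [Real.pi_pos])]
        ring_nf
  have hangular_int : ∫ p in polarCoord.target, angular p = 0 := by
    rw [setIntegral_polarCoord_target hangular]
    refine (setIntegral_congr_fun (g := fun _ => 0) measurableSet_Ioi fun r hr => ?_).trans
      (integral_zero _ _)
    have hscale (θ : ℝ) :
        angular (r, θ) = (r : ℂ)⁻¹ * D (circleMap z r θ) (circleMap 0 r θ * I) := by
      rw [circleMap_zero, mul_assoc, ← real_smul, map_smul, real_smul,
        inv_mul_cancel_left₀ (ofReal_ne_zero.2 (ne_of_gt hr))]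
    calc ∫ θ in Ioo (-π) π, angular (r, θ) = ∫ θ in -π..π, angular (r, θ) := by
          rw [intervalIntegral.integral_of_le (by linarith [Real.pi_pos]),
            integral_Ioc_eq_integral_Ioo]
      _ = (r : ℂ)⁻¹ * ∫ θ in -π..π, D (circleMap z r θ) (circleMap 0 r θ * I) := by
          simp_rw [hscale]
          exact intervalIntegral.integral_const_mul _ _
      _ = 0 := by rw [integral_fderiv_circleMap_mul_I hφ z r, mul_zero]
  calc ∫ ζ, dbar (D ζ) / (ζ - z) = ∫ w, dbar (D (w + z)) / w := by
        simpa using (integral_add_right_eq_self (fun ζ => dbar (D ζ) / (ζ - z)) z).symm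
    _ = ∫ p in polarCoord.target,
          p.1 • (dbar (D (Complex.polarCoord.symm p + z)) / Complex.polarCoord.symm p) :=
        (Complex.integral_comp_polarCoord_symm _).symm
    _ = ∫ p in polarCoord.target, (radial p + I * angular p) / 2 := by
        refine setIntegral_congr_fun polarCoord.open_target.measurableSet fun p hp => ?_
        rw [smul_dbar_div_polarCoord_symm _ hp.1, polarCoord_symm_eq_circleMap,
          ← circleMap_sub_center z, sub_add_cancel]
    _ = -π * φ z := by
        rw [integral_div, integral_add hradial (hangular.const_mul I), integral_const_mul,
          hradial_int, hangular_int, real_smul]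
        push_cast
        ring

/-- The Cauchy–Pompeiu solution of the inhomogeneous Cauchy–Riemann equation: for `φ : ℂ → ℂ`
continuously differentiable with compact support, `f(z) = -(1/π) ∬ φ(ζ)/(ζ - z) dm₂(ζ)` is
continuously differentiable and satisfies `∂f/∂z̄ = φ` on `ℂ`. -/
theorem stmt16 (φ : ℂ → ℂ) (hφ : ContDiff ℝ 1 φ) (hsupp : HasCompactSupport φ) :
    ContDiff ℝ 1 (fun z : ℂ => -(1 / (Real.pi : ℂ)) * ∫ ζ : ℂ, φ ζ / (ζ - z)) ∧
    ∀ z : ℂ,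
      (fderiv ℝ (fun z : ℂ => -(1 / (Real.pi : ℂ)) * ∫ ζ : ℂ, φ ζ / (ζ - z)) z 1 +
          Complex.I *
            fderiv ℝ (fun z : ℂ => -(1 / (Real.pi : ℂ)) * ∫ ζ : ℂ, φ ζ / (ζ - z)) z Complex.I) / 2
        = φ z := by
  have hf : (fun z : ℂ => -(1 / (π : ℂ)) * ∫ ζ : ℂ, φ ζ / (ζ - z)) =
      φ ⋆[ContinuousLinearMap.mul ℝ ℂ] cauchyKernel :=
    funext fun z => (convolution_cauchyKernel φ z).symm
  rw [hf]
  refine ⟨hsupp.contDiff_convolution_left _ hφ locallyIntegrable_cauchyKernel, fun z => ?_⟩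
  rw [← dbar_apply, dbar_fderiv_convolution hφ hsupp locallyIntegrable_cauchyKernel,
    convolution_cauchyKernel, integral_dbar_fderiv_div_sub hφ hsupp]
  field_simp
end

section
/- Two round annuli A₁ = {z ∈ ℂ : r₁ < |z| < R₁} and A₂ = {z ∈ ℂ : r₂ < |z| < R₂} (with 0 < rᵢ < Rᵢ < ∞) are biholomorphically equivalent if and only if R₁/r₁ = R₂/r₂. -/
/-- The round annulus `{z : ℂ | r < |z| < R}`. -/
def roundAnnulus (r R : ℝ) : Set ℂ := {z : ℂ | r < ‖z‖ ∧ ‖z‖ < R}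

/-!
A biholomorphism `f` between the annuli is proper, so `|f|` tends to `r₂` or to `R₂` at each
boundary circle of the source (one value per circle, since thin collars are connected). In the
coordinate `w = log z` the source becomes the strip `log r₁ < re w < log R₁`, and for the slope `m`
matching these boundary values, `f(e^w) e^{-mw}` has the same boundary limit of its modulus on
both edges. Phragmén–Lindelöf, applied to it and to its inverse, shows that its modulus is
constant, so it is constant and `f(z) = c z^m`; periodicity of `e^w` forces `m ∈ ℤ`, and injectivity `m ≠ 0`. Hence
`log (R₂/r₂) = |m| log (R₁/r₁) ≥ log (R₁/r₁)`, and the inverse map gives the other inequality.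
-/

open Complex Set Filter Topology
open scoped Real

theorem Filter.Tendsto.of_sup_nhds_of_eventually_notMem {X Y : Type*} [TopologicalSpace Y]
    {l : Filter X} {φ : X → Y} {y₁ y₂ : Y} {v : Set Y} (h : Tendsto φ l (𝓝 y₁ ⊔ 𝓝 y₂))
    (hv : v ∈ 𝓝 y₂) (hφ : ∀ᶠ x in l, φ x ∉ v) : Tendsto φ l (𝓝 y₁) := by
  refine fun V hV => mem_map.2 ?_
  filter_upwards [h.eventually_mem (union_mem_sup hV hv), hφ] with x hxV hxv
  exact hxV.resolve_right hxv

theorem Filter.HasBasis.exists_tendsto_of_tendsto_nhdsSet_pair {X Y ι : Type*}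
    [TopologicalSpace X] [TopologicalSpace Y] [T2Space Y] {l : Filter X} {p : ι → Prop}
    {s : ι → Set X} (hl : l.HasBasis p s) (hs : ∀ i, p i → IsPreconnected (s i)) {U : Set X}
    {φ : X → Y} (hU : U ∈ l) (hφ : ContinuousOn φ U) {y₁ y₂ : Y}
    (hlim : Tendsto φ l (𝓝ˢ {y₁, y₂})) : ∃ y ∈ ({y₁, y₂} : Set Y), Tendsto φ l (𝓝 y) := by
  rw [nhdsSet_insert, nhdsSet_singleton] at hlim
  rcases eq_or_ne y₁ y₂ with rfl | hne
  · exact ⟨y₁, mem_insert _ _, by rwa [sup_idem] at hlim⟩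
  obtain ⟨u, v, hu, hv, hyu, hyv, huv⟩ := t2_separation hne
  obtain ⟨i, hi, hsi⟩ := hl.eventually_iff.1 <|
    inter_mem hU (hlim (union_mem_sup (hu.mem_nhds hyu) (hv.mem_nhds hyv)))
  have hsi_l : s i ∈ l := hl.mem_of_mem hi
  have hφs : φ '' s i ⊆ u ∨ φ '' s i ⊆ v :=
    ((hs i hi).image φ (hφ.mono fun x hx => (hsi hx).1)).subset_or_subset hu hv huv
      (image_subset_iff.2 fun x hx => (hsi hx).2)
  rcases hφs with hφu | hφv
  · refine ⟨y₁, mem_insert _ _, hlim.of_sup_nhds_of_eventually_notMem (hv.mem_nhds hyv) ?_⟩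
    filter_upwards [hsi_l] with x hx using huv.notMem_of_mem_left (hφu (mem_image_of_mem φ hx))
  · rw [sup_comm] at hlim
    refine ⟨y₂, mem_insert_of_mem _ rfl,
      hlim.of_sup_nhds_of_eventually_notMem (hu.mem_nhds hyu) ?_⟩
    filter_upwards [hsi_l] with x hx using huv.notMem_of_mem_right (hφv (mem_image_of_mem φ hx))

theorem isPreconnected_roundAnnulus {r R : ℝ} (hr : 0 ≤ r) :
    IsPreconnected (roundAnnulus r R) := by
  have hpolar : roundAnnulus r R =
      (fun p : ℝ × ℝ => (p.1 : ℂ) * cexp (p.2 * I)) '' (Ioo r R ×ˢ univ) := by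
    ext z
    constructor
    · rintro ⟨h₁, h₂⟩
      exact ⟨(‖z‖, arg z), ⟨⟨h₁, h₂⟩, trivial⟩, norm_mul_exp_arg_mul_I z⟩
    · rintro ⟨⟨s, θ⟩, ⟨hs, -⟩, rfl⟩
      have hnorm : ‖(s : ℂ) * cexp (θ * I)‖ = s := by
        simp [norm_exp_ofReal_mul_I, abs_of_pos (hr.trans_lt hs.1)]
      show r < ‖_‖ ∧ ‖_‖ < R
      rwa [hnorm]
  rw [hpolar]
  exact ((convex_Ioo r R).prod convex_univ).isPreconnected.image _ (by fun_prop)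

theorem cexp_mem_roundAnnulus_iff {r R : ℝ} (hr : 0 < r) (hR : 0 < R) {w : ℂ} :
    cexp w ∈ roundAnnulus r R ↔ w.re ∈ Ioo (Real.log r) (Real.log R) := by
  simp only [roundAnnulus, mem_ofPred_eq, norm_exp, mem_Ioo, Real.log_lt_iff_lt_exp hr,
    Real.lt_log_iff_exp_lt hR]

theorem hasBasis_comap_norm_nhdsWithin_Ioo (r R c : ℝ) :
    (comap (‖·‖) (𝓝[Ioo r R] c) : Filter ℂ).HasBasis (fun ε : ℝ => 0 < ε)
      (fun ε => roundAnnulus (max r (c - ε)) (min R (c + ε))) := by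
  convert (nhdsWithin_hasBasis Metric.nhds_basis_ball (Ioo r R)).comap (‖·‖ : ℂ → ℝ)
    using 2 with ε
  ext z
  simp [roundAnnulus, Real.ball_eq_Ioo, and_comm, and_assoc, and_left_comm]

theorem tendsto_cexp_comap_re (a b x : ℝ) :
    Tendsto cexp (comap re (𝓝[Ioo a b] x))
      (comap (‖·‖) (𝓝[Ioo (Real.exp a) (Real.exp b)] (Real.exp x))) := by
  rw [tendsto_comap_iff]
  have hnorm : (‖·‖) ∘ cexp = Real.exp ∘ re := funext norm_exp
  have hmaps : MapsTo Real.exp (Ioo a b) (Ioo (Real.exp a) (Real.exp b)) :=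
    fun y hy => ⟨Real.exp_lt_exp.2 hy.1, Real.exp_lt_exp.2 hy.2⟩
  rw [hnorm]
  exact (Real.continuous_exp.continuousWithinAt.tendsto_nhdsWithin hmaps).comp tendsto_comap

theorem tendsto_norm_nhdsSet_of_leftInvOn {r₁ R₁ r₂ R₂ c : ℝ} {f g : ℂ → ℂ}
    (hc : c ∉ Ioo r₁ R₁) (hg : ContinuousOn g (roundAnnulus r₂ R₂))
    (hf' : MapsTo f (roundAnnulus r₁ R₁) (roundAnnulus r₂ R₂))
    (hg' : MapsTo g (roundAnnulus r₂ R₂) (roundAnnulus r₁ R₁))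
    (hgf : LeftInvOn g f (roundAnnulus r₁ R₁)) :
    Tendsto (fun z => ‖f z‖) (comap (‖·‖) (𝓝[Ioo r₁ R₁] c)) (𝓝ˢ {r₂, R₂}) := by
  refine (hasBasis_nhdsSet _).tendsto_right_iff.2 fun V ⟨hV, hrV⟩ => ?_
  set K : Set ℂ := (‖·‖) ⁻¹' (Icc r₂ R₂ \ V)
  have hK : IsCompact K := Metric.isCompact_of_isClosed_isBounded
    ((isClosed_Icc.sdiff hV).preimage continuous_norm)
    ((Metric.isBounded_closedBall (x := 0) (r := R₂)).subset
      fun w hw => mem_closedBall_zero_iff.2 hw.1.2)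
  have hKA : K ⊆ roundAnnulus r₂ R₂ := fun w ⟨⟨h₁, h₂⟩, hwV⟩ =>
    ⟨h₁.lt_of_ne fun h => hwV (h ▸ hrV (mem_insert _ _)),
      h₂.lt_of_ne fun h => hwV (h ▸ hrV (mem_insert_of_mem _ rfl))⟩
  -- `g '' K` is a compact subset of the source annulus, so its norms stay away from `c`
  have hC : IsClosed ((‖·‖) '' (g '' K)) :=
    ((hK.image_of_continuousOn (hg.mono hKA)).image continuous_norm).isClosed
  have hcC : c ∉ (‖·‖) '' (g '' K) := by
    rintro ⟨_, ⟨w, hw, rfl⟩, rfl⟩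
    exact hc (hg' (hKA hw))
  filter_upwards [preimage_mem_comap self_mem_nhdsWithin,
    preimage_mem_comap (mem_nhdsWithin_of_mem_nhds (hC.isOpen_compl.mem_nhds hcC))]
    with z hz hzC
  by_contra hfV
  exact hzC ⟨z, ⟨f z, ⟨⟨(hf' hz).1.le, (hf' hz).2.le⟩, hfV⟩, hgf hz⟩, rfl⟩

theorem exists_tendsto_norm_of_leftInvOn {r₁ R₁ r₂ R₂ c : ℝ} {f g : ℂ → ℂ} (hr₁ : 0 ≤ r₁)
    (hc : c ∉ Ioo r₁ R₁) (hf : ContinuousOn f (roundAnnulus r₁ R₁))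
    (hg : ContinuousOn g (roundAnnulus r₂ R₂))
    (hf' : MapsTo f (roundAnnulus r₁ R₁) (roundAnnulus r₂ R₂))
    (hg' : MapsTo g (roundAnnulus r₂ R₂) (roundAnnulus r₁ R₁))
    (hgf : LeftInvOn g f (roundAnnulus r₁ R₁)) :
    ∃ c' ∈ ({r₂, R₂} : Set ℝ), Tendsto (fun z => ‖f z‖) (comap (‖·‖) (𝓝[Ioo r₁ R₁] c)) (𝓝 c') :=
  (hasBasis_comap_norm_nhdsWithin_Ioo r₁ R₁ c).exists_tendsto_of_tendsto_nhdsSet_pair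
    (fun _ _ => isPreconnected_roundAnnulus (le_max_of_le_left hr₁))
    (preimage_mem_comap self_mem_nhdsWithin) (continuous_norm.comp_continuousOn hf)
    (tendsto_norm_nhdsSet_of_leftInvOn hc hg hf' hg' hgf)

theorem exists_tendsto_norm_comp_cexp_of_leftInvOn {r₁ R₁ r₂ R₂ c : ℝ} {f g : ℂ → ℂ}
    (hr₁ : 0 < r₁) (hR₁ : 0 < R₁) (hc : 0 < c) (hc' : c ∉ Ioo r₁ R₁)
    (hf : ContinuousOn f (roundAnnulus r₁ R₁)) (hg : ContinuousOn g (roundAnnulus r₂ R₂))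
    (hf' : MapsTo f (roundAnnulus r₁ R₁) (roundAnnulus r₂ R₂))
    (hg' : MapsTo g (roundAnnulus r₂ R₂) (roundAnnulus r₁ R₁))
    (hgf : LeftInvOn g f (roundAnnulus r₁ R₁)) :
    ∃ c' ∈ ({r₂, R₂} : Set ℝ), Tendsto (fun w => ‖f (cexp w)‖)
      (comap re (𝓝[Ioo (Real.log r₁) (Real.log R₁)] (Real.log c))) (𝓝 c') := by
  obtain ⟨c', hc'', hlim⟩ := exists_tendsto_norm_of_leftInvOn hr₁.le hc' hf hg hf' hg' hgf
  have hexp := tendsto_cexp_comap_re (Real.log r₁) (Real.log R₁) (Real.log c)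
  rw [Real.exp_log hr₁, Real.exp_log hR₁, Real.exp_log hc] at hexp
  exact ⟨c', hc'', hlim.comp hexp⟩

theorem exists_int_eq_of_mul_cexp_periodic {c m w : ℂ} (hc : c ≠ 0)
    (h : c * cexp (m * (w + 2 * π * I)) = c * cexp (m * w)) : ∃ n : ℤ, m = n := by
  rw [mul_add, exp_add, ← mul_assoc] at h
  have h₁ : cexp (m * (2 * π * I)) = 1 :=
    mul_left_cancel₀ (mul_ne_zero hc (exp_ne_zero _)) (h.trans (mul_one _).symm)
  obtain ⟨n, hn⟩ := Complex.exp_eq_one_iff.1 h₁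
  exact ⟨n, mul_right_cancel₀ two_pi_I_ne_zero hn⟩

section Strip

variable {a b : ℝ}

theorem exists_mem_Ioo_forall_re_eq_of_eventually_left {P : ℂ → Prop} {x : ℝ}
    (hx : x ∈ Ioo a b) (h : ∀ᶠ w in comap re (𝓝[Ioo a b] a), P w) :
    ∃ a' ∈ Ioo a x, ∀ w : ℂ, w.re = a' → P w := by
  rw [eventually_comap, nhdsWithin_Ioo_eq_nhdsGT (hx.1.trans hx.2)] at h
  obtain ⟨a', hP, ha'⟩ := (h.and (Ioo_mem_nhdsGT hx.1)).exists
  exact ⟨a', ha', hP⟩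

theorem exists_mem_Ioo_forall_re_eq_of_eventually_right {P : ℂ → Prop} {x : ℝ}
    (hx : x ∈ Ioo a b) (h : ∀ᶠ w in comap re (𝓝[Ioo a b] b), P w) :
    ∃ b' ∈ Ioo x b, ∀ w : ℂ, w.re = b' → P w := by
  rw [eventually_comap, nhdsWithin_Ioo_eq_nhdsLT (hx.1.trans hx.2)] at h
  obtain ⟨b', hP, hb'⟩ := (h.and (Ioo_mem_nhdsLT hx.2)).exists
  exact ⟨b', hb', hP⟩

variable {G : ℂ → ℂ} {C M : ℝ}

theorem norm_le_of_tendsto_edges (hG : DifferentiableOn ℂ G (re ⁻¹' Ioo a b))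
    (hM : ∀ w ∈ re ⁻¹' Ioo a b, ‖G w‖ ≤ M)
    (ha : Tendsto (fun w => ‖G w‖) (comap re (𝓝[Ioo a b] a)) (𝓝 C))
    (hb : Tendsto (fun w => ‖G w‖) (comap re (𝓝[Ioo a b] b)) (𝓝 C))
    {w : ℂ} (hw : w ∈ re ⁻¹' Ioo a b) : ‖G w‖ ≤ C := by
  refine le_of_forall_pos_le_add fun η hη => ?_
  obtain ⟨a', ha', hGa'⟩ := exists_mem_Ioo_forall_re_eq_of_eventually_left hw
    (ha.eventually_le_const (lt_add_of_pos_right C hη))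
  obtain ⟨b', hb', hGb'⟩ := exists_mem_Ioo_forall_re_eq_of_eventually_right hw
    (hb.eventually_le_const (lt_add_of_pos_right C hη))
  have hsub : re ⁻¹' Icc a' b' ⊆ re ⁻¹' Ioo a b :=
    preimage_mono (Icc_subset_Ioo ha'.1 hb'.2)
  have hGd : DiffContOnCl ℂ G (re ⁻¹' Ioo a' b') := by
    refine DifferentiableOn.diffContOnCl (hG.mono ?_)
    rwa [closure_preimage_re, closure_Ioo (ha'.2.trans hb'.1).ne]
  have hgrowth : G =O[comap (_root_.abs ∘ im) atTop ⊓ 𝓟 (re ⁻¹' Ioo a' b')]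
      fun z => Real.exp (0 * Real.exp (0 * |z.im|)) := by
    refine Asymptotics.IsBigO.of_bound M (eventually_inf_principal.2 (.of_forall fun z hz => ?_))
    simpa using hM z (hsub (Ioo_subset_Icc_self hz))
  exact PhragmenLindelof.vertical_strip hGd
    ⟨0, div_pos Real.pi_pos (sub_pos.2 (ha'.2.trans hb'.1)), 0, hgrowth⟩
    hGa' hGb' ha'.2.le hb'.1.le

theorem norm_eq_of_tendsto_edges {δ : ℝ} (hC : 0 < C) (hδ : 0 < δ)
    (hG : DifferentiableOn ℂ G (re ⁻¹' Ioo a b))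
    (hGM : ∀ w ∈ re ⁻¹' Ioo a b, δ ≤ ‖G w‖ ∧ ‖G w‖ ≤ M)
    (ha : Tendsto (fun w => ‖G w‖) (comap re (𝓝[Ioo a b] a)) (𝓝 C))
    (hb : Tendsto (fun w => ‖G w‖) (comap re (𝓝[Ioo a b] b)) (𝓝 C))
    {w : ℂ} (hw : w ∈ re ⁻¹' Ioo a b) : ‖G w‖ = C := by
  have hG₀ : ∀ w ∈ re ⁻¹' Ioo a b, G w ≠ 0 := fun w hw =>
    norm_pos_iff.1 (hδ.trans_le (hGM w hw).1)
  have hinv : ‖G w‖⁻¹ ≤ C⁻¹ := by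
    simpa using norm_le_of_tendsto_edges (G := G⁻¹) (M := δ⁻¹) (hG.inv hG₀)
      (fun w hw => by simpa using inv_anti₀ hδ (hGM w hw).1)
      (by simpa using ha.inv₀ hC.ne') (by simpa using hb.inv₀ hC.ne') hw
  exact le_antisymm (norm_le_of_tendsto_edges hG (fun w hw => (hGM w hw).2) ha hb hw)
    ((inv_le_inv₀ (norm_pos_iff.2 (hG₀ w hw)) hC).1 hinv)

theorem norm_mul_cexp_eq_of_tendsto_edges {F : ℂ → ℂ} {r R ca cb m : ℝ} (hr : 0 < r)
    (hF : DifferentiableOn ℂ F (re ⁻¹' Ioo a b))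
    (hFA : MapsTo F (re ⁻¹' Ioo a b) (roundAnnulus r R)) (hca : 0 < ca) (hcb : 0 < cb)
    (ha : Tendsto (fun w => ‖F w‖) (comap re (𝓝[Ioo a b] a)) (𝓝 ca))
    (hb : Tendsto (fun w => ‖F w‖) (comap re (𝓝[Ioo a b] b)) (𝓝 cb))
    (hm : Real.log cb - Real.log ca = m * (b - a)) {w : ℂ} (hw : w ∈ re ⁻¹' Ioo a b) :
    ‖F w * cexp (-(m * w))‖ = ca * Real.exp (-(m * a)) := by
  have hnorm : ∀ w : ℂ, ‖F w * cexp (-(m * w))‖ = ‖F w‖ * Real.exp (-(m * w.re)) := by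
    simp [norm_exp]
  have hexp : ∀ x, Tendsto (fun w : ℂ => Real.exp (-(m * w.re))) (comap re (𝓝[Ioo a b] x))
      (𝓝 (Real.exp (-(m * x)))) := fun x =>
    ((by fun_prop : Continuous fun y => Real.exp (-(m * y))).tendsto x).comp
      (tendsto_comap.mono_right nhdsWithin_le_nhds)
  have hcb_eq : cb * Real.exp (-(m * b)) = ca * Real.exp (-(m * a)) := by
    rw [← Real.exp_log hca, ← Real.exp_log hcb, ← Real.exp_add, ← Real.exp_add]
    congr 1
    linarith
  have hbound : ∀ w ∈ re ⁻¹' Ioo a b, |m * w.re| ≤ |m| * (|a| + |b|) := fun w hw => by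
    rw [abs_mul]
    refine mul_le_mul_of_nonneg_left (abs_le.2 ⟨?_, ?_⟩) (abs_nonneg m) <;>
      linarith [hw.1, hw.2, neg_abs_le a, le_abs_self b, abs_nonneg a, abs_nonneg b]
  refine norm_eq_of_tendsto_edges (G := fun w => F w * cexp (-(m * w))) (by positivity)
    (mul_pos hr (Real.exp_pos (-(|m| * (|a| + |b|)))))
    (hF.mul (by fun_prop : Differentiable ℂ fun w : ℂ => cexp (-(m * w))).differentiableOn)
    (M := R * Real.exp (|m| * (|a| + |b|))) (fun w hw => ?_) ?_ ?_ hw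
  · rw [hnorm]
    have h₁ := abs_le.1 (hbound w hw)
    constructor
    · exact mul_le_mul (hFA hw).1.le (Real.exp_le_exp.2 (by linarith)) (by positivity)
        (norm_nonneg _)
    · exact mul_le_mul (hFA hw).2.le (Real.exp_le_exp.2 (by linarith)) (by positivity)
        (hr.le.trans (hFA hw).1.le |>.trans (hFA hw).2.le)
  · simpa only [hnorm] using ha.mul (hexp a)
  · simpa only [hnorm, hcb_eq] using hb.mul (hexp b)

theorem exists_int_eqOn_const_mul_cexp {F : ℂ → ℂ} {r R ca cb : ℝ} (hab : a < b)
    (hF : DifferentiableOn ℂ F (re ⁻¹' Ioo a b)) (hper : ∀ w, F (w + 2 * π * I) = F w)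
    (hr : 0 < r) (hFA : MapsTo F (re ⁻¹' Ioo a b) (roundAnnulus r R)) (hca : 0 < ca)
    (hcb : 0 < cb) (ha : Tendsto (fun w => ‖F w‖) (comap re (𝓝[Ioo a b] a)) (𝓝 ca))
    (hb : Tendsto (fun w => ‖F w‖) (comap re (𝓝[Ioo a b] b)) (𝓝 cb)) :
    ∃ n : ℤ, Real.log cb - Real.log ca = n * (b - a) ∧
      ∃ c, ∀ w ∈ re ⁻¹' Ioo a b, F w = c * cexp (n * w) := by
  set m := (Real.log cb - Real.log ca) / (b - a)
  have hm : Real.log cb - Real.log ca = m * (b - a) :=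
    (div_mul_cancel₀ _ (sub_pos.2 hab).ne').symm
  set G : ℂ → ℂ := fun w => F w * cexp (-(m * w))
  have hS : IsOpen (re ⁻¹' Ioo a b) := isOpen_Ioo.preimage continuous_re
  have hnormG : ∀ w ∈ re ⁻¹' Ioo a b, ‖G w‖ = ca * Real.exp (-(m * a)) := fun w hw =>
    norm_mul_cexp_eq_of_tendsto_edges hr hF hFA hca hcb ha hb hm hw
  set w₀ : ℂ := ↑((a + b) / 2)
  have hw₀ : w₀ ∈ re ⁻¹' Ioo a b := by
    simp only [w₀, mem_preimage, ofReal_re, mem_Ioo]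
    constructor <;> linarith
  have hG : EqOn G (Function.const ℂ (G w₀)) (re ⁻¹' Ioo a b) :=
    eqOn_of_isPreconnected_of_isMaxOn_norm ((convex_Ioo a b).linear_preimage reLm).isPreconnected
      hS (hF.mul (by fun_prop : Differentiable ℂ fun w : ℂ => cexp (-(m * w))).differentiableOn)
      hw₀ fun w hw => by simp [hnormG w hw, hnormG w₀ hw₀]
  have hFG : ∀ w ∈ re ⁻¹' Ioo a b, F w = G w₀ * cexp (m * w) := fun w hw =>
    calc F w = G w * cexp (m * w) := by simp [G, mul_assoc, ← exp_add]
      _ = G w₀ * cexp (m * w) := congrArg (· * cexp (m * w)) (hG hw)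
  have hG₀ : G w₀ ≠ 0 := norm_ne_zero_iff.1 (by rw [hnormG w₀ hw₀]; positivity)
  have hw₁ : w₀ + 2 * π * I ∈ re ⁻¹' Ioo a b := by simpa using hw₀
  obtain ⟨n, hn⟩ := exists_int_eq_of_mul_cexp_periodic hG₀
    (by rw [← hFG _ hw₁, ← hFG _ hw₀, hper])
  have hmn : m = n := by exact_mod_cast hn
  exact ⟨n, hmn ▸ hm, G w₀, fun w hw => by rw [hFG w hw, hmn, ofReal_intCast]⟩

end Strip

theorem log_div_le_log_div_of_leftInvOn {r₁ R₁ r₂ R₂ : ℝ} {f g : ℂ → ℂ} (hr₁ : 0 < r₁)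
    (hR₁ : r₁ < R₁) (hr₂ : 0 < r₂) (hR₂ : r₂ < R₂)
    (hf : DifferentiableOn ℂ f (roundAnnulus r₁ R₁)) (hg : ContinuousOn g (roundAnnulus r₂ R₂))
    (hf' : MapsTo f (roundAnnulus r₁ R₁) (roundAnnulus r₂ R₂))
    (hg' : MapsTo g (roundAnnulus r₂ R₂) (roundAnnulus r₁ R₁))
    (hgf : LeftInvOn g f (roundAnnulus r₁ R₁)) :
    Real.log (R₁ / r₁) ≤ Real.log (R₂ / r₂) := by
  have hR₁₀ : 0 < R₁ := hr₁.trans hR₁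
  have hexp : MapsTo cexp (re ⁻¹' Ioo (Real.log r₁) (Real.log R₁)) (roundAnnulus r₁ R₁) :=
    fun w hw => (cexp_mem_roundAnnulus_iff hr₁ hR₁₀).2 hw
  obtain ⟨ca, hca, ha⟩ := exists_tendsto_norm_comp_cexp_of_leftInvOn hr₁ hR₁₀ hr₁
    (by simp) hf.continuousOn hg hf' hg' hgf
  obtain ⟨cb, hcb, hb⟩ := exists_tendsto_norm_comp_cexp_of_leftInvOn hr₁ hR₁₀ hR₁₀
    (by simp) hf.continuousOn hg hf' hg' hgf
  have hpos : ∀ c ∈ ({r₂, R₂} : Set ℝ), 0 < c := by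
    rintro c (rfl | rfl) <;> linarith
  have hlog : ∀ c ∈ ({r₂, R₂} : Set ℝ), Real.log c ∈ Icc (Real.log r₂) (Real.log R₂) := by
    rintro c (rfl | rfl)
    exacts [⟨le_rfl, Real.log_le_log hr₂ hR₂.le⟩, ⟨Real.log_le_log hr₂ hR₂.le, le_rfl⟩]
  obtain ⟨n, hn, c, hfc⟩ := exists_int_eqOn_const_mul_cexp (F := fun w => f (cexp w))
    (Real.log_lt_log hr₁ hR₁) (hf.comp differentiable_exp.differentiableOn hexp)
    (fun w => by simp [exp_add]) hr₂ (hf'.comp hexp) (hpos ca hca) (hpos cb hcb) ha hb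
  -- for `n = 0`, `f` would take the same value at `e^{w₀}` and `-e^{w₀}`
  have hn₀ : n ≠ 0 := by
    rintro rfl
    set w₀ : ℂ := ↑((Real.log r₁ + Real.log R₁) / 2)
    have hw₀ : w₀ ∈ re ⁻¹' Ioo (Real.log r₁) (Real.log R₁) := by
      simp only [w₀, mem_preimage, ofReal_re, mem_Ioo]
      constructor <;> linarith [Real.log_lt_log hr₁ hR₁]
    have hw₁ : w₀ + π * I ∈ re ⁻¹' Ioo (Real.log r₁) (Real.log R₁) := by simpa using hw₀
    have h := hgf.injOn (hexp hw₁) (hexp hw₀) (by rw [hfc _ hw₁, hfc _ hw₀]; simp)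
    rw [exp_add, exp_pi_mul_I] at h
    exact exp_ne_zero w₀ (by linear_combination -h / 2)
  have hL₁ : 0 ≤ Real.log R₁ - Real.log r₁ := sub_nonneg.2 (Real.log_le_log hr₁ hR₁.le)
  calc Real.log (R₁ / r₁) = Real.log R₁ - Real.log r₁ := Real.log_div hR₁₀.ne' hr₁.ne'
    _ ≤ |(n : ℝ)| * (Real.log R₁ - Real.log r₁) :=
      le_mul_of_one_le_left hL₁ (by exact_mod_cast Int.one_le_abs hn₀)
    _ = |Real.log cb - Real.log ca| := by rw [hn, abs_mul, abs_of_nonneg hL₁]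
    _ ≤ Real.log R₂ - Real.log r₂ :=
      abs_sub_le_of_le_of_le (hlog cb hcb).1 (hlog cb hcb).2 (hlog ca hca).1 (hlog ca hca).2
    _ = Real.log (R₂ / r₂) := (Real.log_div (hr₂.trans hR₂).ne' hr₂.ne').symm

theorem mapsTo_ofReal_div_mul_roundAnnulus {r₁ R₁ r₂ R₂ : ℝ} (hr₁ : 0 < r₁) (hr₂ : 0 < r₂)
    (h : R₁ / r₁ = R₂ / r₂) :
    MapsTo (fun z => ((r₂ / r₁ : ℝ) : ℂ) * z) (roundAnnulus r₁ R₁) (roundAnnulus r₂ R₂) := by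
  intro z ⟨h₁, h₂⟩
  have hk : 0 < r₂ / r₁ := div_pos hr₂ hr₁
  have hR : r₂ / r₁ * R₁ = R₂ := by
    rw [div_eq_div_iff hr₁.ne' hr₂.ne'] at h
    field_simp
    linarith
  have hr : r₂ / r₁ * r₁ = r₂ := by field_simp
  simp only [roundAnnulus, mem_ofPred_eq, norm_mul, norm_real, Real.norm_eq_abs, abs_of_pos hk]
  exact ⟨hr.symm.trans_lt (mul_lt_mul_of_pos_left h₁ hk),
    (mul_lt_mul_of_pos_left h₂ hk).trans_eq hR⟩

/-- Two round annuli `{r₁ < |z| < R₁}` and `{r₂ < |z| < R₂}` are biholomorphically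
equivalent if and only if `R₁/r₁ = R₂/r₂`. -/
theorem stmt19 (r1 R1 r2 R2 : ℝ) (hr1 : 0 < r1) (hR1 : r1 < R1) (hr2 : 0 < r2)
    (hR2 : r2 < R2) :
    (∃ f g : ℂ → ℂ,
      DifferentiableOn ℂ f (roundAnnulus r1 R1) ∧
      DifferentiableOn ℂ g (roundAnnulus r2 R2) ∧
      Set.MapsTo f (roundAnnulus r1 R1) (roundAnnulus r2 R2) ∧
      Set.MapsTo g (roundAnnulus r2 R2) (roundAnnulus r1 R1) ∧
      (∀ z ∈ roundAnnulus r1 R1, g (f z) = z) ∧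
      (∀ w ∈ roundAnnulus r2 R2, f (g w) = w)) ↔
    R1 / r1 = R2 / r2 := by
  constructor
  · rintro ⟨f, g, hf, hg, hf', hg', hgf, hfg⟩
    refine Real.log_injOn_pos (div_pos (hr1.trans hR1) hr1) (div_pos (hr2.trans hR2) hr2)
      (le_antisymm ?_ ?_)
    · exact log_div_le_log_div_of_leftInvOn hr1 hR1 hr2 hR2 hf hg.continuousOn hf' hg' hgf
    · exact log_div_le_log_div_of_leftInvOn hr2 hR2 hr1 hR1 hg hf.continuousOn hg' hf' hfg
  · intro h
    refine ⟨fun z => ((r2 / r1 : ℝ) : ℂ) * z, fun w => ((r1 / r2 : ℝ) : ℂ) * w,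
      (differentiable_id.const_mul _).differentiableOn,
      (differentiable_id.const_mul _).differentiableOn,
      mapsTo_ofReal_div_mul_roundAnnulus hr1 hr2 h,
      mapsTo_ofReal_div_mul_roundAnnulus hr2 hr1 h.symm, fun z _ => ?_, fun w _ => ?_⟩ <;>
    · push_cast
      field_simp [ofReal_ne_zero.2 hr1.ne', ofReal_ne_zero.2 hr2.ne']
end
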